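/- Let A = (A_i)_{i∈ℤ/2nℤ} ∈ G and define σ_G(A) to be the tuple with i-th entry −Ω·A_{−i}^{−T}·Ω. Then σ_G(A) ∈ G, i.e. each −Ω·A_{−i}^{−T}·Ω is invertible and σ_G(A)_{i+1}τ₁ = τ₁σ_G(A)_i for all i ∈ ℤ/2nℤ; moreover σ_G(σ_G(A)) = A. Furthermore, σ_G(A) = A if and only if A is symplectic, i.e. ⟨A_i v, A_{−i} w⟩ = ⟨v,w⟩ for all i ∈ ℤ/2nℤ and all v, w ∈ ℂ^{2n}. -/
import Mathlib


open Matrix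

/-- The Gram matrix Ω of the symplectic form: Ω_{s,t} = (−1)^{s+1} if s+t = 2n+1
(1-indexed) and 0 otherwise. -/
noncomputable def Omega (n : ℕ) : Matrix (Fin (2*n)) (Fin (2*n)) ℂ :=
  Matrix.of fun s t =>
    if ((s : ℕ) + 1) + ((t : ℕ) + 1) = 2*n + 1 then (-1 : ℂ)^((s : ℕ) + 1 + 1) else 0

/-- The symplectic bilinear form ⟨v,w⟩ = vᵀ Ω w on ℂ^{2n}. -/
noncomputable def sform (n : ℕ) (v w : Fin (2*n) → ℂ) : ℂ :=
  v ⬝ᵥ (Omega n).mulVec w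


/-- The matrix of the shift map τ₁ : e_j ↦ e_{j+1} (1 ≤ j ≤ 2n−1), e_{2n} ↦ 0. -/
noncomputable def tauMat (n : ℕ) : Matrix (Fin (2*n)) (Fin (2*n)) ℂ :=
  Matrix.of fun s t => if (s : ℕ) = (t : ℕ) + 1 then 1 else 0

/-- Membership in G = Aut(U_{[2n]}) : tuples of invertible matrices
with A_{i+1}τ₁ = τ₁A_i for all i. -/
def memG (n : ℕ) (A : ZMod (2*n) → Matrix (Fin (2*n)) (Fin (2*n)) ℂ) : Prop :=
  (∀ i, IsUnit (A i)) ∧ (∀ i, A (i + 1) * tauMat n = tauMat n * A i)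

/-- σ_G(A)_i = −Ω·A_{−i}^{−T}·Ω. -/
noncomputable def sigmaG (n : ℕ) (A : ZMod (2*n) → Matrix (Fin (2*n)) (Fin (2*n)) ℂ) :
    ZMod (2*n) → Matrix (Fin (2*n)) (Fin (2*n)) ℂ :=
  fun i => -(Omega n * ((A (-i))⁻¹)ᵀ * Omega n)

def rmap {n : ℕ} (s : Fin (2*n)) : Fin (2*n) := ⟨2*n-1-(s:ℕ), by have := s.isLt; omega⟩

lemma omega_apply {n : ℕ} (s t : Fin (2*n)) :
    Omega n s t = if (s:ℕ)+(t:ℕ) = 2*n-1 then (-1:ℂ)^(s:ℕ) else 0 := by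
  simp only [Omega, of_apply]
  have hs := s.isLt
  by_cases h : (s:ℕ)+(t:ℕ) = 2*n-1
  · rw [if_pos (by omega), if_pos h, pow_succ, pow_succ]; ring
  · rw [if_neg (by omega), if_neg h]

lemma omega_mul_apply {n : ℕ} (M : Matrix (Fin (2*n)) (Fin (2*n)) ℂ) (s u : Fin (2*n)) :
    (Omega n * M) s u = (-1:ℂ)^(s:ℕ) * M (rmap s) u := by
  rw [mul_apply, Finset.sum_eq_single (rmap s)]
  · rw [omega_apply, if_pos (by simp [rmap]; have := s.isLt; omega)]
  · intro t _ ht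
    rw [omega_apply, if_neg, zero_mul]
    intro h; exact ht (Fin.ext (by simp [rmap]; have := s.isLt; omega))
  · simp

lemma neg_one_pow_rmap {n : ℕ} (u : Fin (2*n)) :
    ((-1:ℂ))^((rmap u : Fin (2*n)) : ℕ) = -(-1:ℂ)^(u:ℕ) := by
  have hu := u.isLt
  have h2 : (-1:ℂ)^((rmap u : Fin (2*n)) : ℕ) * (-1)^(u:ℕ) = (-1:ℂ)^(2*n-1) := by
    rw [← pow_add]; congr 1; simp [rmap]; omega
  have h3 : (-1:ℂ)^(2*n-1) = -1 := Odd.neg_one_pow ⟨n-1, by omega⟩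
  have h5 : ((-1:ℂ)^(u:ℕ)) ≠ 0 := pow_ne_zero _ (by norm_num)
  have h6 : (-(-1:ℂ)^(u:ℕ)) * (-1)^(u:ℕ) = -1 := by
    rw [neg_mul, ← pow_add]
    have : Even ((u:ℕ)+(u:ℕ)) := ⟨u, rfl⟩
    rw [this.neg_one_pow]
  exact mul_right_cancel₀ h5 (by rw [h2, h3, h6])

lemma mul_omega_apply {n : ℕ} (M : Matrix (Fin (2*n)) (Fin (2*n)) ℂ) (s u : Fin (2*n)) :
    (M * Omega n) s u = -((-1:ℂ)^(u:ℕ)) * M s (rmap u) := by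
  rw [mul_apply, Finset.sum_eq_single (rmap u)]
  · rw [omega_apply, if_pos (by simp [rmap]; have := u.isLt; omega), neg_one_pow_rmap]
    ring
  · intro t _ ht
    rw [omega_apply, if_neg, mul_zero]
    intro h; exact ht (Fin.ext (by simp [rmap] at h ⊢; have := u.isLt; omega))
  · simp

lemma omega_mul_omega (n : ℕ) : Omega n * Omega n = -1 := by
  ext s u
  rw [omega_mul_apply, omega_apply]
  have hs := s.isLt; have hu := u.isLt
  by_cases h : s = u
  · subst h
    rw [if_pos (show ((rmap s : Fin (2*n)):ℕ) + (s:ℕ) = 2*n-1 by simp [rmap]; omega),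
      neg_one_pow_rmap, Matrix.neg_apply, Matrix.one_apply_eq, mul_neg, ← pow_add,
      Even.neg_one_pow ⟨(s:ℕ), rfl⟩]
  · have h' : (s:ℕ) ≠ (u:ℕ) := fun hh => h (Fin.ext hh)
    rw [if_neg (show ¬(((rmap s : Fin (2*n)):ℕ) + (u:ℕ) = 2*n-1) by simp [rmap]; omega),
      mul_zero, Matrix.neg_apply, Matrix.one_apply_ne h, neg_zero]

lemma omega_transpose (n : ℕ) : (Omega n)ᵀ = -(Omega n) := by
  ext s u
  rw [transpose_apply, Matrix.neg_apply, omega_apply, omega_apply]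
  have hs := s.isLt; have hu := u.isLt
  by_cases h : (s:ℕ)+(u:ℕ) = 2*n-1
  · rw [if_pos (by omega), if_pos h]
    have h2 : (-1:ℂ)^(u:ℕ) * (-1)^(s:ℕ) = (-1:ℂ)^(2*n-1) := by
      rw [← pow_add]; congr 1; omega
    have h3 : (-1:ℂ)^(2*n-1) = -1 := Odd.neg_one_pow ⟨n-1, by omega⟩
    have h5 : ((-1:ℂ)^(s:ℕ)) ≠ 0 := pow_ne_zero _ (by norm_num)
    refine mul_right_cancel₀ h5 ?_
    rw [h2, h3, neg_mul, ← pow_add]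
    have : Even ((s:ℕ)+(s:ℕ)) := ⟨s, rfl⟩
    rw [this.neg_one_pow]
  · rw [if_neg (by omega), if_neg h, neg_zero]

lemma omega_tau_key (n : ℕ) : Omega n * (tauMat n)ᵀ * Omega n = tauMat n := by
  ext s u
  rw [mul_omega_apply, omega_mul_apply, transpose_apply]
  have hs := s.isLt; have hu := u.isLt
  show _ = tauMat n s u
  simp only [tauMat, of_apply]
  by_cases h : (s:ℕ) = (u:ℕ)+1
  · rw [if_pos (by simp [rmap]; omega), if_pos h]
    rw [show (s:ℕ) = (u:ℕ)+1 from h]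
    rw [pow_succ]
    have : ((-1:ℂ)^(u:ℕ))*((-1:ℂ)^(u:ℕ)) = 1 := by
      rw [← pow_add, Even.neg_one_pow ⟨(u:ℕ), rfl⟩]
    calc -(-1:ℂ)^(u:ℕ) * ((-1:ℂ)^(u:ℕ) * -1 * 1)
        = ((-1:ℂ)^(u:ℕ))*((-1:ℂ)^(u:ℕ)) := by ring
      _ = 1 := this
  · rw [if_neg (by simp [rmap]; omega), if_neg h]
    ring

lemma omega_isUnit (n : ℕ) : IsUnit (Omega n) :=
  ⟨⟨Omega n, -(Omega n), by rw [Matrix.mul_neg, omega_mul_omega]; simp,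
    by rw [Matrix.neg_mul, omega_mul_omega]; simp⟩, rfl⟩

lemma omega_omega_mul {n : ℕ} (X : Matrix (Fin (2*n)) (Fin (2*n)) ℂ) :
    Omega n * (Omega n * X) = -X := by
  rw [← Matrix.mul_assoc, omega_mul_omega]; simp

noncomputable def gConj {n : ℕ} (M : Matrix (Fin (2*n)) (Fin (2*n)) ℂ) :
    Matrix (Fin (2*n)) (Fin (2*n)) ℂ := -(Omega n * M * Omega n)

lemma g_mul {n : ℕ} (M N : Matrix (Fin (2*n)) (Fin (2*n)) ℂ) :
    gConj M * gConj N = gConj (M * N) := by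
  unfold gConj
  simp only [Matrix.neg_mul, Matrix.mul_neg, neg_neg, Matrix.mul_assoc, omega_omega_mul]

lemma g_one {n : ℕ} : gConj (1 : Matrix (Fin (2*n)) (Fin (2*n)) ℂ) = 1 := by
  unfold gConj
  rw [Matrix.mul_one, omega_mul_omega]; simp

lemma g_transpose {n : ℕ} (M : Matrix (Fin (2*n)) (Fin (2*n)) ℂ) :
    (gConj M)ᵀ = gConj Mᵀ := by
  unfold gConj
  rw [transpose_neg, transpose_mul, transpose_mul, omega_transpose]
  simp [Matrix.neg_mul, Matrix.mul_neg, Matrix.mul_assoc]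

lemma g_g {n : ℕ} (M : Matrix (Fin (2*n)) (Fin (2*n)) ℂ) : gConj (gConj M) = M := by
  unfold gConj
  simp only [Matrix.mul_neg, Matrix.neg_mul, neg_neg, Matrix.mul_assoc, omega_omega_mul]
  rw [omega_mul_omega]; simp

lemma g_inj {n : ℕ} {M N : Matrix (Fin (2*n)) (Fin (2*n)) ℂ}
    (h : gConj M = gConj N) : M = N := by
  have := congrArg gConj h
  rwa [g_g, g_g] at this

lemma g_isUnit {n : ℕ} {M : Matrix (Fin (2*n)) (Fin (2*n)) ℂ} (h : IsUnit M) :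
    IsUnit (gConj M) := by
  have hd := (Matrix.isUnit_iff_isUnit_det M).mp h
  refine ⟨⟨gConj M, gConj M⁻¹, ?_, ?_⟩, rfl⟩
  · rw [g_mul, Matrix.mul_nonsing_inv M hd, g_one]
  · rw [g_mul, Matrix.nonsing_inv_mul M hd, g_one]

lemma g_inv {n : ℕ} {M : Matrix (Fin (2*n)) (Fin (2*n)) ℂ} (h : IsUnit M) :
    (gConj M)⁻¹ = gConj M⁻¹ := by
  have hd := (Matrix.isUnit_iff_isUnit_det M).mp h
  exact Matrix.inv_eq_right_inv (by rw [g_mul, Matrix.mul_nonsing_inv M hd, g_one])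

lemma g_tau {n : ℕ} : gConj ((tauMat n)ᵀ) = -(tauMat n) := by
  unfold gConj
  rw [omega_tau_key]

lemma bilin_ext {n : ℕ} {M N : Matrix (Fin (2*n)) (Fin (2*n)) ℂ}
    (h : ∀ v w, v ⬝ᵥ M.mulVec w = v ⬝ᵥ N.mulVec w) : M = N := by
  ext s t
  have := h (Pi.single s 1) (Pi.single t 1)
  simpa [Matrix.mulVec_single, single_dotProduct] using this

lemma mulVec_dot_mulVec {n : ℕ} (M N : Matrix (Fin (2*n)) (Fin (2*n)) ℂ)
    (v w : Fin (2*n) → ℂ) :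
    (M.mulVec v) ⬝ᵥ N.mulVec w = v ⬝ᵥ (Mᵀ * N).mulVec w := by
  rw [← Matrix.mulVec_mulVec, Matrix.dotProduct_mulVec v, Matrix.vecMul_transpose]


/-- for A ∈ G, σ_G(A) ∈ G, σ_G(σ_G(A)) = A, and σ_G(A) = A if and
only if A is symplectic, i.e. ⟨A_i v, A_{−i} w⟩ = ⟨v,w⟩ for all i, v, w. -/
theorem statement11 (n : ℕ) (hn : 1 ≤ n)
    (A : ZMod (2*n) → Matrix (Fin (2*n)) (Fin (2*n)) ℂ) (hA : memG n A) :
    memG n (sigmaG n A) ∧ sigmaG n (sigmaG n A) = A ∧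
      (sigmaG n A = A ↔
        ∀ (i : ZMod (2*n)) (v w : Fin (2*n) → ℂ),
          sform n ((A i).mulVec v) ((A (-i)).mulVec w) = sform n v w) := by
  obtain ⟨hU, hC⟩ := hA
  have hdet : ∀ i, IsUnit (A i).det := fun i => (Matrix.isUnit_iff_isUnit_det _).mp (hU i)
  have hUIT : ∀ i, IsUnit (((A i)⁻¹)ᵀ) := by
    intro i
    refine (Matrix.isUnit_iff_isUnit_det _).mpr (Matrix.isUnit_det_transpose _ ?_)
    exact (Matrix.isUnit_nonsing_inv_det_iff).mpr (hdet i)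
  have hsig : ∀ i, sigmaG n A i = gConj (((A (-i))⁻¹)ᵀ) := fun _ => rfl
  have part1a : ∀ i, IsUnit (sigmaG n A i) := fun i => by
    rw [hsig]; exact g_isUnit (hUIT (-i))
  have part1b : ∀ i, sigmaG n A (i+1) * tauMat n = tauMat n * sigmaG n A i := by
    intro i
    have e : -(i+1) + 1 = -i := by ring
    have hrel : A (-i) * tauMat n = tauMat n * A (-(i+1)) := by
      have h0 := hC (-(i+1)); rwa [e] at h0
    have hBd := hdet (-(i+1)); have hCd := hdet (-i)
    have h1 : tauMat n * (A (-(i+1)))⁻¹ = (A (-i))⁻¹ * tauMat n := by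
      have h2 : (A (-i))⁻¹ * ((A (-i) * tauMat n) * (A (-(i+1)))⁻¹)
          = (A (-i))⁻¹ * ((tauMat n * A (-(i+1))) * (A (-(i+1)))⁻¹) := by rw [hrel]
      rw [Matrix.mul_assoc (tauMat n), Matrix.mul_nonsing_inv _ hBd, Matrix.mul_one,
        ← Matrix.mul_assoc, ← Matrix.mul_assoc, Matrix.nonsing_inv_mul _ hCd,
        Matrix.one_mul] at h2
      exact h2
    have hT : ((A (-(i+1)))⁻¹)ᵀ * (tauMat n)ᵀ = (tauMat n)ᵀ * ((A (-i))⁻¹)ᵀ := by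
      have h3 := congrArg Matrix.transpose h1
      rwa [Matrix.transpose_mul, Matrix.transpose_mul] at h3
    rw [hsig, hsig]
    have ht : tauMat n = -gConj ((tauMat n)ᵀ) := by rw [g_tau, neg_neg]
    rw [ht, Matrix.mul_neg, Matrix.neg_mul, g_mul, g_mul, hT]
  have part2 : sigmaG n (sigmaG n A) = A := by
    funext i
    have e : sigmaG n (sigmaG n A) i = gConj (((sigmaG n A (-i))⁻¹)ᵀ) := rfl
    rw [e, hsig (-i), neg_neg, g_inv (hUIT i), Matrix.transpose_nonsing_inv,
      Matrix.nonsing_inv_nonsing_inv ((A i)ᵀ)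
        (by rw [Matrix.det_transpose]; exact hdet i),
      g_transpose, Matrix.transpose_transpose, g_g]
  have key2 : ∀ i, (sigmaG n A i = A i ↔ (A i)ᵀ * (Omega n * A (-i)) = Omega n) := by
    intro i
    constructor
    · intro h
      have hT : (A i)ᵀ = gConj ((A (-i))⁻¹) := by
        rw [← h, hsig, g_transpose, Matrix.transpose_transpose]
      rw [hT]
      unfold gConj
      rw [Matrix.neg_mul]
      simp only [Matrix.mul_assoc]
      rw [omega_omega_mul, Matrix.mul_neg, Matrix.mul_neg, neg_neg,
        Matrix.nonsing_inv_mul _ (hdet (-i)), Matrix.mul_one]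
    · intro h
      have h2 : (A i)ᵀ * Omega n = Omega n * (A (-i))⁻¹ := by
        have h2' := congrArg (· * (A (-i))⁻¹) h
        simp only [Matrix.mul_assoc] at h2'
        rwa [Matrix.mul_nonsing_inv _ (hdet (-i)), Matrix.mul_one] at h2'
      have h3 : (A i)ᵀ = gConj ((A (-i))⁻¹) := by
        have h3' := congrArg (· * Omega n) h2
        rw [Matrix.mul_assoc ((A i)ᵀ), omega_mul_omega, Matrix.mul_neg,
          Matrix.mul_one] at h3'
        unfold gConj
        rw [← h3', neg_neg]
      rw [hsig]
      have h4 := congrArg Matrix.transpose h3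
      rw [Matrix.transpose_transpose, g_transpose] at h4
      exact h4.symm
  refine ⟨⟨part1a, part1b⟩, part2, ?_⟩
  constructor
  · intro h i v w
    have hm := (key2 i).mp (congrFun h i)
    unfold sform
    rw [Matrix.mulVec_mulVec, mulVec_dot_mulVec, hm]
  · intro h
    funext i
    refine (key2 i).mpr (bilin_ext fun v w => ?_)
    have hvw := h i v w
    unfold sform at hvw
    rwa [Matrix.mulVec_mulVec, mulVec_dot_mulVec] at hvw
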